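/- Let μ > 0 and let r : ℝ → EuclideanSpace ℝ (Fin 3) be a curve with r(t) ≠ 0 for all t. Suppose v : ℝ → EuclideanSpace ℝ (Fin 3) satisfies: for every t, r has derivative v(t) at t, and v has derivative −(μ/‖r(t)‖³) • r(t) at t (Newton's inverse-square two-body law). Then the specific mechanical energy t ↦ (1/2)‖v(t)‖² − μ/‖r(t)‖ is a constant function of t. -/

import Mathlib

open scoped RealInnerProductSpace

/-- **Conservation of specific mechanical energy** in the Newtonian two-body
problem: if `r'' = -(μ/‖r‖³) • r`, then `ε = (1/2)‖ṙ‖² - μ/‖r‖` is constant. -/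
theorem energy_conservation (μ : ℝ) (hμ : 0 < μ)
    (r v : ℝ → EuclideanSpace ℝ (Fin 3))
    (hr : ∀ t, r t ≠ 0)
    (hrv : ∀ t, HasDerivAt r (v t) t)
    (hva : ∀ t, HasDerivAt v (-(μ / ‖r t‖ ^ 3) • r t) t) :
    ∃ C : ℝ, ∀ t : ℝ, (1 / 2) * ‖v t‖ ^ 2 - μ / ‖r t‖ = C := by
  set E : ℝ → ℝ := fun t => (1 / 2) * ‖v t‖ ^ 2 - μ / ‖r t‖ with hE
  have hEeq : E = fun t => (1 / 2) * ⟪v t, v t⟫ - μ / Real.sqrt ⟪r t, r t⟫ := by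
    funext t
    rw [real_inner_self_eq_norm_sq, real_inner_self_eq_norm_sq,
      Real.sqrt_sq (norm_nonneg _)]
  have key : ∀ t, HasDerivAt E 0 t := by
    intro t
    have hrn : (0:ℝ) < ‖r t‖ := norm_pos_iff.mpr (hr t)
    have h1 : HasDerivAt (fun t => ⟪v t, v t⟫)
        (⟪v t, -(μ / ‖r t‖ ^ 3) • r t⟫ + ⟪-(μ / ‖r t‖ ^ 3) • r t, v t⟫) t :=
      (hva t).inner ℝ (hva t)
    have h2 : HasDerivAt (fun t => ⟪r t, r t⟫)
        (⟪r t, v t⟫ + ⟪v t, r t⟫) t := (hrv t).inner ℝ (hrv t)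
    have hne : ⟪r t, r t⟫ ≠ 0 := by
      rw [real_inner_self_eq_norm_sq]; positivity
    have h3 : HasDerivAt (fun t => Real.sqrt ⟪r t, r t⟫)
        ((⟪r t, v t⟫ + ⟪v t, r t⟫) / (2 * Real.sqrt ⟪r t, r t⟫)) t :=
      (Real.hasDerivAt_sqrt hne).comp t h2 |>.congr_deriv (by ring)
    have hsq : Real.sqrt ⟪r t, r t⟫ = ‖r t‖ := by
      rw [real_inner_self_eq_norm_sq, Real.sqrt_sq (norm_nonneg _)]
    have hsne : Real.sqrt ⟪r t, r t⟫ ≠ 0 := by rw [hsq]; positivity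
    have h4 : HasDerivAt (fun t => μ / Real.sqrt ⟪r t, r t⟫)
        ((0 * Real.sqrt ⟪r t, r t⟫ - μ * ((⟪r t, v t⟫ + ⟪v t, r t⟫) / (2 * Real.sqrt ⟪r t, r t⟫))) / (Real.sqrt ⟪r t, r t⟫)^2) t :=
      (hasDerivAt_const t μ).div h3 hsne
    rw [hEeq]
    have := ((h1.const_mul (1/2 : ℝ)).sub h4)
    convert this using 1
    case e'_4 => rfl
    case e'_5 => rfl
    case e'_8 => rfl
    rw [hsq]
    simp only [inner_smul_left, inner_smul_right, real_inner_comm (r t) (v t), conj_trivial]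
    have h5 : ‖r t‖ ^ 3 ≠ 0 := by positivity
    field_simp
    ring
  obtain ⟨C, hC⟩ : ∃ C, ∀ t, E t = C := by
    refine ⟨E 0, fun t => ?_⟩
    have : ∀ x : ℝ, deriv E x = 0 := fun x => (key x).deriv
    exact is_const_of_deriv_eq_zero (fun x => (key x).differentiableAt) this t 0
  exact ⟨C, hC⟩
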